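/- arXiv:2511.08485 — 4 statements merged into one kernel-verified Lean document; each statement's English description precedes it below -/
import Mathlib

section
/- Let $\mathcal{S}$ be a family of subsets of a finite universe $U$, let $L \subseteq U$, and let $w : U \to \mathbb{R}_{\ge 0}$ be an assignment of dual values satisfying $\sum_{e \in s} w_e \le 1$ for every $s \in \mathcal{S}$ (dual feasibility over the whole universe), and suppose $\sum_{e \in U} w_e \le (1+\varepsilon) \sum_{e \in L} w_e$. Let $T \subseteq \mathcal{S}$ be a collection of sets each of which is tight, i.e., $\sum_{e \in s} w_e \ge (1+\varepsilon)^{-1}$ for all $s \in T$. If every element of $U$ belongs to at most $f$ sets of $\mathcal{S}$, then $|T| \le (1+\varepsilon)^2 f \cdot \mathrm{OPT}$, where $\mathrm{OPT}$ is the minimum number of sets of $\mathcal{S}$ needed to cover $L$. -/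
/-!
Summing tightness over `T` gives `|T| / (1 + ε) ≤ ∑_{s ∈ T} w(s)`. Since every element lies in at
most `f` sets, this double sum is at most `f · w(U) ≤ f (1 + ε) w(L)`, and by weak duality
`w(L) ≤ OPT`: an optimal cover `C` of `L` has `w(L) ≤ ∑_{s ∈ C} w(s) ≤ |C|`.
-/

open Finset

theorem sum_le_card_of_cover {α : Type*} (w : α → ℝ) (hw : ∀ e, 0 ≤ w e)
    (L : Finset α) (C : Finset (Finset α)) (hfeas : ∀ s ∈ C, ∑ e ∈ s, w e ≤ 1)
    (hcov : ∀ e ∈ L, ∃ s ∈ C, e ∈ s) :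
    ∑ e ∈ L, w e ≤ #C := by
  classical
  choose! g hgC hmem using hcov
  calc ∑ e ∈ L, w e = ∑ s ∈ C, ∑ e ∈ L with g e = s, w e := (sum_fiberwise_of_maps_to hgC w).symm
    _ ≤ ∑ s ∈ C, ∑ e ∈ s, w e := by
        refine sum_le_sum fun s _ => sum_le_sum_of_subset_of_nonneg ?_ fun e _ _ => hw e
        intro e he
        obtain ⟨heL, rfl⟩ := mem_filter.mp he
        exact hmem e heL
    _ ≤ ∑ _s ∈ C, (1 : ℝ) := sum_le_sum hfeas
    _ = #C := by simp

theorem sum_sum_le_mul_sum_of_degree_le {α : Type*} [DecidableEq α] (w : α → ℝ) (U : Finset α)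
    (hw : ∀ e ∈ U, 0 ≤ w e) (T : Finset (Finset α)) (hTU : ∀ s ∈ T, s ⊆ U) (f : ℕ)
    (hdeg : ∀ e ∈ U, #{s ∈ T | e ∈ s} ≤ f) :
    ∑ s ∈ T, ∑ e ∈ s, w e ≤ f * ∑ e ∈ U, w e := by
  have hswap : ∑ s ∈ T, ∑ e ∈ s, w e = ∑ e ∈ U, ∑ s ∈ T with e ∈ s, w e :=
    sum_comm' fun s e => by
      simp only [mem_filter]
      exact ⟨fun ⟨hs, he⟩ => ⟨⟨hs, he⟩, hTU s hs he⟩, fun ⟨⟨hs, he⟩, _⟩ => ⟨hs, he⟩⟩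
  rw [hswap, mul_sum]
  refine sum_le_sum fun e he => ?_
  rw [sum_const, nsmul_eq_mul]
  exact mul_le_mul_of_nonneg_right (by exact_mod_cast hdeg e he) (hw e he)

theorem tight_sets_card_le_general {α : Type*} [DecidableEq α] (U : Finset α)
    (S : Finset (Finset α)) (L : Finset α) (hSU : ∀ s ∈ S, s ⊆ U)
    (ε : ℝ) (hε : 0 < ε) (w : α → ℝ) (hw0 : ∀ e, 0 ≤ w e)
    (hfeas : ∀ s ∈ S, ∑ e ∈ s, w e ≤ 1)
    (hUL : ∑ e ∈ U, w e ≤ (1 + ε) * ∑ e ∈ L, w e)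
    (T : Finset (Finset α)) (hTS : T ⊆ S)
    (htight : ∀ s ∈ T, (1 + ε)⁻¹ ≤ ∑ e ∈ s, w e)
    (f : ℕ) (hf : ∀ e ∈ U, (S.filter (fun s => e ∈ s)).card ≤ f)
    (OPT : ℕ)
    (hOPT : IsLeast {n : ℕ | ∃ C ⊆ S, (∀ e ∈ L, ∃ s ∈ C, e ∈ s) ∧ C.card = n} OPT) :
    (T.card : ℝ) ≤ (1 + ε) ^ 2 * f * OPT := by
  obtain ⟨⟨C, hCS, hcov, rfl⟩, -⟩ := hOPT
  have hε₁ : 0 < 1 + ε := by linarith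
  have hweak := sum_le_card_of_cover w hw0 L C (fun s hs => hfeas s (hCS hs)) hcov
  have hdouble := sum_sum_le_mul_sum_of_degree_le w U (fun e _ => hw0 e) T
    (fun s hs => hSU s (hTS hs)) f
    (fun e he => (card_le_card (filter_subset_filter _ hTS)).trans (hf e he))
  have hcount : #T • (1 + ε)⁻¹ ≤ ∑ s ∈ T, ∑ e ∈ s, w e := card_nsmul_le_sum T _ _ htight
  rw [nsmul_eq_mul] at hcount
  calc (#T : ℝ) = (1 + ε) * (#T * (1 + ε)⁻¹) := by field_simp
    _ ≤ (1 + ε) * (f * ∑ e ∈ U, w e) := mul_le_mul_of_nonneg_left (hcount.trans hdouble) hε₁.le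
    _ ≤ (1 + ε) * (f * ((1 + ε) * ∑ e ∈ L, w e)) := by gcongr
    _ ≤ (1 + ε) * (f * ((1 + ε) * #C)) := by gcongr
    _ = (1 + ε) ^ 2 * f * #C := by ring

/-- LP-duality approximation bound for tight sets of an extended dual solution. -/
theorem tight_sets_card_le {α : Type*} [DecidableEq α] (U : Finset α)
    (S : Finset (Finset α)) (L : Finset α) (hL : L ⊆ U) (hSU : ∀ s ∈ S, s ⊆ U)
    (ε : ℝ) (hε : 0 < ε) (w : α → ℝ) (hw0 : ∀ e, 0 ≤ w e)
    (hfeas : ∀ s ∈ S, ∑ e ∈ s, w e ≤ 1)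
    (hUL : ∑ e ∈ U, w e ≤ (1 + ε) * ∑ e ∈ L, w e)
    (T : Finset (Finset α)) (hTS : T ⊆ S)
    (htight : ∀ s ∈ T, (1 + ε)⁻¹ ≤ ∑ e ∈ s, w e)
    (f : ℕ) (hf : ∀ e ∈ U, (S.filter (fun s => e ∈ s)).card ≤ f)
    (OPT : ℕ)
    (hOPT : IsLeast {n : ℕ | ∃ C ⊆ S, (∀ e ∈ L, ∃ s ∈ C, e ∈ s) ∧ C.card = n} OPT) :
    (T.card : ℝ) ≤ (1 + ε) ^ 2 * f * OPT :=
  tight_sets_card_le_general U S L hSU ε hε w hw0 hfeas hUL T hTS htight f hf OPT hOPT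
end

section
/- Consider an online minimization problem over discrete time-steps in which a solution is a finite set of objects and the optimum size changes by at most $\delta$ per time-step. Suppose algorithm $\mathcal{A}$ maintains at every time-step an $\alpha$-approximate solution and inserts at most $\beta$ objects into its solution per time-step (its deletions per time-step may be unbounded), where $\alpha, \beta \ge 1$. Define algorithm $\mathcal{A}'$ that simulates $\mathcal{A}$ but, instead of deleting objects, moves them to a garbage set included in its output, and at the end of each time-step removes $\min(\beta + \delta\alpha, |\text{garbage}|)$ objects from the garbage set. Then at every time-step, $\mathcal{A}'$ outputs an $\alpha$-approximate solution, and both the number of objects inserted into and the number deleted from the output of $\mathcal{A}'$ per time-step are at most $2\beta + \delta\alpha$. -/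
/-!
Run `𝒜` and, instead of deleting objects, keep them in the output as garbage; at the end of
each step discard `r = ⌈β + δα⌉` garbage objects (all of them if there are fewer). Insertions
into the output are insertions of `𝒜`, and deletions are at most `r ≤ 2β + δα` since `β ≥ 1`.
For the approximation ratio: while garbage survives a step, that step shrank the total size
`|S| + |garbage|` by `r` after growing it by at most `β`, whereas the budget `α · OPT` shrank by
at most `δα ≤ r - β`.
-/

open Finset

namespace Finset

variable {γ : Type*} [DecidableEq γ]

/-- `X` with `r` of its elements removed (all of them if `X` has at most `r` elements). -/
noncomputable def discard (r : ℕ) (X : Finset γ) : Finset γ :=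
  (X.toList.drop r).toFinset

theorem discard_subset (r : ℕ) (X : Finset γ) : X.discard r ⊆ X := fun _ hx =>
  mem_toList.1 (List.drop_subset r _ (List.mem_toFinset.1 hx))

theorem card_discard (r : ℕ) (X : Finset γ) : (X.discard r).card = X.card - r := by
  rw [discard, List.toFinset_card_of_nodup ((List.drop_sublist r _).nodup X.nodup_toList),
    List.length_drop, length_toList]

theorem card_sdiff_discard_le (r : ℕ) (X : Finset γ) : (X \ X.discard r).card ≤ r := by
  rw [card_sdiff_of_subset (discard_subset r X), card_discard]
  omega

end Finset

section Deamortize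

variable {γ : Type*} [DecidableEq γ]

/-- The output after one step: the new solution `S'` together with the surviving garbage, i.e.
the old output `O` minus `S'`, of which `r` objects are discarded. -/
noncomputable def deamortizeStep (r : ℕ) (O S' : Finset γ) : Finset γ :=
  S' ∪ (O \ S').discard r

theorem sdiff_deamortizeStep_card_le (r : ℕ) (O S' : Finset γ) :
    (O \ deamortizeStep r O S').card ≤ r := by
  have : O \ deamortizeStep r O S' = (O \ S') \ (O \ S').discard r := by
    ext x
    simp only [deamortizeStep, mem_sdiff, mem_union, not_or]
    tauto
  rw [this]
  exact card_sdiff_discard_le r _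

theorem deamortizeStep_sdiff_subset {r : ℕ} {O S S' : Finset γ} (hS : S ⊆ O) :
    deamortizeStep r O S' \ O ⊆ S' \ S := by
  intro x hx
  simp only [deamortizeStep, mem_sdiff, mem_union] at hx
  obtain ⟨hx | hx, hxO⟩ := hx
  · exact mem_sdiff.2 ⟨hx, fun hxS => hxO (hS hxS)⟩
  · exact absurd (mem_sdiff.1 (discard_subset r _ hx)).1 hxO

theorem card_deamortizeStep_le (r : ℕ) (O S' : Finset γ) :
    (deamortizeStep r O S').card ≤ S'.card ∨
      (deamortizeStep r O S').card + r ≤ (S' \ O).card + O.card := by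
  have hdisj : Disjoint S' ((O \ S').discard r) :=
    disjoint_left.2 fun _ hx hx' => (mem_sdiff.1 (discard_subset r _ hx')).2 hx
  have hsplit : (O \ S').card + S'.card = (S' \ O).card + O.card := by
    rw [card_sdiff_add_card, card_sdiff_add_card, union_comm]
  rw [deamortizeStep, card_union_of_disjoint hdisj, card_discard]
  omega

noncomputable def deamortize (r : ℕ) (S : ℕ → Finset γ) : ℕ → Finset γ
  | 0 => S 0
  | t + 1 => deamortizeStep r (deamortize r S t) (S (t + 1))

theorem subset_deamortize (r : ℕ) (S : ℕ → Finset γ) (t : ℕ) : S t ⊆ deamortize r S t := by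
  cases t with
  | zero => exact subset_rfl
  | succ t => exact subset_union_left

theorem card_deamortize_sdiff_le (r : ℕ) (S : ℕ → Finset γ) (t : ℕ) :
    (deamortize r S (t + 1) \ deamortize r S t).card ≤ (S (t + 1) \ S t).card :=
  card_le_card (deamortizeStep_sdiff_subset (subset_deamortize r S t))

theorem card_sdiff_deamortize_le (r : ℕ) (S : ℕ → Finset γ) (t : ℕ) :
    (deamortize r S t \ deamortize r S (t + 1)).card ≤ r :=
  sdiff_deamortizeStep_card_le r _ _

/-- While garbage survives, the `r` objects discarded per step pay for the insertions and for
any decrease of the bound `f`. -/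
theorem card_deamortize_le {r : ℕ} {S : ℕ → Finset γ} {f : ℕ → ℝ}
    (hSf : ∀ t, ((S t).card : ℝ) ≤ f t)
    (hf : ∀ t, ((S (t + 1) \ S t).card : ℝ) + f t ≤ f (t + 1) + r) (t : ℕ) :
    ((deamortize r S t).card : ℝ) ≤ f t := by
  induction t with
  | zero => exact hSf 0
  | succ t ih =>
    have hins : ((S (t + 1) \ deamortize r S t).card : ℝ) ≤ (S (t + 1) \ S t).card := by
      exact_mod_cast card_le_card (sdiff_subset_sdiff subset_rfl (subset_deamortize r S t))
    rcases card_deamortizeStep_le r (deamortize r S t) (S (t + 1)) with h | h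
    · exact (Nat.cast_le.2 h).trans (hSf (t + 1))
    · have h : ((deamortize r S (t + 1)).card : ℝ) + r
          ≤ (S (t + 1) \ deamortize r S t).card + (deamortize r S t).card := by
        exact_mod_cast h
      linarith [hf t]

end Deamortize

theorem deamortize_deletion_recourse_general {γ : Type*} [DecidableEq γ] (a b : ℝ) (δ : ℕ)
    (ha : 1 ≤ a) (hb : 1 ≤ b)
    (OPT : ℕ → ℕ)
    (hδ : ∀ t, ((OPT (t + 1) : ℤ) - OPT t).natAbs ≤ δ)
    (S : ℕ → Finset γ) (hS0 : S 0 = ∅)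
    (happrox : ∀ t, ((S t).card : ℝ) ≤ a * OPT t)
    (hins : ∀ t, ((S (t + 1) \ S t).card : ℝ) ≤ b) :
    ∃ O : ℕ → Finset γ,
      O 0 = ∅ ∧
      (∀ t, S t ⊆ O t) ∧
      (∀ t, ((O t).card : ℝ) ≤ a * OPT t) ∧
      (∀ t, ((O (t + 1) \ O t).card : ℝ) ≤ 2 * b + δ * a) ∧
      (∀ t, ((O t \ O (t + 1)).card : ℝ) ≤ 2 * b + δ * a) := by
  set r := ⌈b + δ * a⌉₊
  have hδa : 0 ≤ (δ : ℝ) * a := by positivity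
  have hr_ge : b + δ * a ≤ r := Nat.le_ceil _
  have hr_le : (r : ℝ) ≤ 2 * b + δ * a := by
    linarith [Nat.ceil_lt_add_one (show 0 ≤ b + δ * a by linarith)]
  have hOPT t : (OPT t : ℝ) ≤ OPT (t + 1) + δ := by
    have : (OPT t : ℤ) ≤ OPT (t + 1) + δ := by have := hδ t; omega
    exact_mod_cast this
  refine ⟨deamortize r S, hS0, subset_deamortize r S, ?_, fun t => ?_, fun t => ?_⟩
  · refine card_deamortize_le happrox fun t => ?_
    nlinarith [hins t, hOPT t]
  · linarith [hins t, (Nat.cast_le (α := ℝ)).2 (card_deamortize_sdiff_le r S t)]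
  · exact (Nat.cast_le.2 (card_sdiff_deamortize_le r S t)).trans hr_le

/-- De-amortizing deletion recourse: from an `a`-approximate algorithm with worst-case
insertion recourse `b` one gets an `a`-approximate algorithm with worst-case recourse
(both insertion and deletion) at most `2b + δa`. -/
theorem deamortize_deletion_recourse {γ : Type*} [DecidableEq γ] (a b : ℝ) (δ : ℕ)
    (ha : 1 ≤ a) (hb : 1 ≤ b)
    (OPT : ℕ → ℕ) (hOPT0 : OPT 0 = 0)
    (hδ : ∀ t, ((OPT (t + 1) : ℤ) - OPT t).natAbs ≤ δ)
    (S : ℕ → Finset γ) (hS0 : S 0 = ∅)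
    (happrox : ∀ t, ((S t).card : ℝ) ≤ a * OPT t)
    (hins : ∀ t, ((S (t + 1) \ S t).card : ℝ) ≤ b) :
    ∃ O : ℕ → Finset γ,
      O 0 = ∅ ∧
      (∀ t, S t ⊆ O t) ∧
      (∀ t, ((O t).card : ℝ) ≤ a * OPT t) ∧
      (∀ t, ((O (t + 1) \ O t).card : ℝ) ≤ 2 * b + δ * a) ∧
      (∀ t, ((O t \ O (t + 1)).card : ℝ) ≤ 2 * b + δ * a) :=
  deamortize_deletion_recourse_general a b δ ha hb OPT hδ S hS0 happrox hins
end

section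
/- Let $\varepsilon > 0$ and let $(A_j)_{j \ge 0}$ and $(D_j)_{j \ge 0}$ be nondecreasing sequences of finite sets with $A_{-1} = D_{-1} = \emptyset$, eventually constant with limits $A$ and $D$ respectively, such that $|D_j| \le \varepsilon |A_j|$ for all $j \ge 0$. Suppose every element $e \in A$ that first appears in $A_j \setminus A_{j-1}$ has weight $w_e = (1+\varepsilon)^{-j}$, and every element $e \in D$ that first appears in $D_j \setminus D_{j-1}$ has weight $w_e \le (1+\varepsilon)^{-j}$. Then $\sum_{e \in D} w_e \le \varepsilon \sum_{e \in A} w_e$. -/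
/-!
Give each element the level at which it first enters its chain. By Abel summation, the total
level-weight of a chain `S` at stage `N` equals `|S N| f N + ∑_{i < N} |S i| (f i - f (i + 1))`,
a combination of the sizes `|S i|` with nonnegative coefficients when `f` is antitone and
nonnegative. So the tidy bound `|D i| ≤ ε |A i|`, applied level by level, transfers to the weights.
-/

open Finset

section EntryLevel

variable {α : Type*} {S : ℕ → Finset α} {e : α} {j : ℕ}

/-- Junk value `0` when `e` lies in no `S j`. -/
noncomputable def entryLevel (S : ℕ → Finset α) (e : α) : ℕ := sInf {j | e ∈ S j}

theorem mem_entryLevel (h : e ∈ S j) : e ∈ S (entryLevel S e) :=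
  Nat.sInf_mem (s := {j | e ∈ S j}) ⟨j, h⟩

theorem entryLevel_le (h : e ∈ S j) : entryLevel S e ≤ j :=
  Nat.sInf_le h

theorem notMem_of_lt_entryLevel (h : j < entryLevel S e) : e ∉ S j :=
  fun he => (entryLevel_le he).not_gt h

theorem entryLevel_eq_zero (h : e ∈ S 0) : entryLevel S e = 0 :=
  Nat.le_zero.mp (entryLevel_le h)

theorem entryLevel_eq_succ_of_mem_sdiff [DecidableEq α] (hS : Monotone S) (h : e ∈ S (j + 1) \ S j) :
    entryLevel S e = j + 1 := by
  obtain ⟨hin, hout⟩ := mem_sdiff.mp h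
  refine (entryLevel_le hin).antisymm (Nat.succ_le_of_lt ?_)
  by_contra! hle
  exact hout (hS hle (mem_entryLevel hin))

variable {R : Type*}

theorem sum_entryLevel_eq [DecidableEq α] [CommRing R] (hS : Monotone S) (f : ℕ → R) (N : ℕ) :
    ∑ e ∈ S N, f (entryLevel S e)
      = #(S N) * f N + ∑ i ∈ range N, #(S i) * (f i - f (i + 1)) := by
  induction N with
  | zero =>
    rw [sum_congr rfl fun e he => by rw [entryLevel_eq_zero he], sum_const, nsmul_eq_mul]
    simp
  | succ n ih =>
    have hsub : S n ⊆ S (n + 1) := hS n.le_succ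
    have hcard : (#(S (n + 1) \ S n) : R) + #(S n) = #(S (n + 1)) := by
      rw [← Nat.cast_add, card_sdiff_add_card_eq_card hsub]
    rw [← sum_sdiff hsub, ih, sum_range_succ,
      sum_congr rfl fun e he => by rw [entryLevel_eq_succ_of_mem_sdiff hS he],
      sum_const, nsmul_eq_mul]
    linear_combination f (n + 1) * hcard

theorem sum_entryLevel_le_mul [DecidableEq α] [CommRing R] [PartialOrder R] [IsOrderedRing R]
    {T : ℕ → Finset α} (hS : Monotone S) (hT : Monotone T) {f : ℕ → R} (hf : Antitone f)
    {N : ℕ} (hfN : 0 ≤ f N) (c : R) (hcard : ∀ i, (#(S i) : R) ≤ c * #(T i)) :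
    ∑ e ∈ S N, f (entryLevel S e) ≤ c * ∑ e ∈ T N, f (entryLevel T e) := by
  rw [sum_entryLevel_eq hS, sum_entryLevel_eq hT, mul_add, mul_sum]
  refine add_le_add ?_ (sum_le_sum fun i _ => ?_) <;> rw [← mul_assoc]
  · exact mul_le_mul_of_nonneg_right (hcard N) hfN
  · exact mul_le_mul_of_nonneg_right (hcard i) (sub_nonneg.mpr (hf i.le_succ))

end EntryLevel

theorem dormant_weight_le_general {α : Type*} [DecidableEq α] (ε : ℝ) (hε : 0 < ε)
    (A D : ℕ → Finset α) (hA : Monotone A) (hD : Monotone D)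
    (N : ℕ)
    (w : α → ℝ)
    (htidy : ∀ j, ((D j).card : ℝ) ≤ ε * (A j).card)
    (hwA : ∀ j, ∀ e ∈ A j, (∀ i, i < j → e ∉ A i) → w e = (1 + ε) ^ (-(j : ℤ)))
    (hwD : ∀ j, ∀ e ∈ D j, (∀ i, i < j → e ∉ D i) → w e ≤ (1 + ε) ^ (-(j : ℤ))) :
    ∑ e ∈ D N, w e ≤ ε * ∑ e ∈ A N, w e := by
  set f : ℕ → ℝ := fun j => (1 + ε) ^ (-(j : ℤ))
  have hf : Antitone f := fun i j hij =>
    zpow_le_zpow_right₀ (by linarith) (by simpa using hij)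
  calc ∑ e ∈ D N, w e ≤ ∑ e ∈ D N, f (entryLevel D e) :=
        sum_le_sum fun e he => hwD _ e (mem_entryLevel he) fun _ => notMem_of_lt_entryLevel
    _ ≤ ε * ∑ e ∈ A N, f (entryLevel A e) :=
        sum_entryLevel_le_mul hD hA hf (by positivity) ε htidy
    _ = ε * ∑ e ∈ A N, w e := by
        congr 1
        exact sum_congr rfl fun e he =>
          (hwA _ e (mem_entryLevel he) fun _ => notMem_of_lt_entryLevel).symm

/-- Abel-summation bound: total weight on dormant elements is at most `ε` times the
total weight on active elements, under the tidy property. -/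
theorem dormant_weight_le {α : Type*} [DecidableEq α] (ε : ℝ) (hε : 0 < ε)
    (A D : ℕ → Finset α) (hA : Monotone A) (hD : Monotone D)
    (N : ℕ) (hAN : ∀ j, A j ⊆ A N) (hDN : ∀ j, D j ⊆ D N)
    (w : α → ℝ)
    (htidy : ∀ j, ((D j).card : ℝ) ≤ ε * (A j).card)
    (hwA : ∀ j, ∀ e ∈ A j, (∀ i, i < j → e ∉ A i) → w e = (1 + ε) ^ (-(j : ℤ)))
    (hwD : ∀ j, ∀ e ∈ D j, (∀ i, i < j → e ∉ D i) → w e ≤ (1 + ε) ^ (-(j : ℤ))) :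
    ∑ e ∈ D N, w e ≤ ε * ∑ e ∈ A N, w e :=
  dormant_weight_le_general ε hε A D hA hD N w htidy hwA hwD
end

section
/- In the catch-up greedy algorithm with speed $c \ge 2$ (covering $c$ hitherto-uncovered elements per time-step) running on a slowly evolving set $X$ (changing by at most one element per time-step), if the algorithm starts at time $t$ with $|X(t)| = N$, it terminates by time-step $t + \lceil N/(c-1) \rceil$. Moreover, if at some time $t'$ during the run the number of uncovered elements is $R$, the remaining run time is at most $\lceil R/(c-1) \rceil$, and at most $\lceil R/(c-1)\rceil$ elements inserted after $t'$ can end up passive; hence the number of passive elements at termination is at most $\frac{1}{c-1} \cdot (\text{number of covered-late elements}) + O(1)$. -/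
/-!
While the run lasts, each step covers `c` elements and at most one new one arrives, so the
number of uncovered elements falls by at least `c - 1` per step and is exhausted after
`⌈R / (c - 1)⌉` steps. A quantity that grows by at most one per step, such as the number of
passive elements, gains at most that many during the remaining run.
-/

namespace Nat

variable {f : ℕ → ℕ} {a d : ℕ}

lemma le_sub_mul_of_forall_le_sub (hf : ∀ s, a ≤ s → f (s + 1) ≤ f s - d) (k : ℕ) :
    f (a + k) ≤ f a - k * d := by
  induction k with
  | zero => simp
  | succ k ih =>
    calc f (a + k + 1) ≤ f (a + k) - d := hf _ (le_add_right a k)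
      _ ≤ f a - k * d - d := Nat.sub_le_sub_right ih d
      _ = f a - (k + 1) * d := by rw [Nat.sub_sub, Nat.succ_mul]

lemma le_add_mul_of_forall_le_add (hf : ∀ s, a ≤ s → f (s + 1) ≤ f s + d) (k : ℕ) :
    f (a + k) ≤ f a + k * d := by
  induction k with
  | zero => simp
  | succ k ih =>
    calc f (a + k + 1) ≤ f (a + k) + d := hf _ (le_add_right a k)
      _ ≤ f a + k * d + d := Nat.add_le_add_right ih d
      _ = f a + (k + 1) * d := by rw [Nat.add_assoc, Nat.succ_mul]

lemma apply_add_ceilDiv_eq_zero_of_forall_le_sub (hd : 0 < d)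
    (hf : ∀ s, a ≤ s → f (s + 1) ≤ f s - d) : f (a + f a ⌈/⌉ d) = 0 := by
  have hcover : f a ≤ f a ⌈/⌉ d * d := by
    rw [Nat.mul_comm]; exact le_smul_ceilDiv hd
  have := le_sub_mul_of_forall_le_sub hf (f a ⌈/⌉ d)
  omega

end Nat

/-- Catch-up greedy running-time and passive-element bounds: the uncovered count `u`
(covering `c` elements per step while at most one is inserted per step) reaches 0 within
`⌈u(t')/(c-1)⌉` steps of any time `t'`, and any counter `p` of passive elements that
increases by at most one per step gains at most `⌈u(t')/(c-1)⌉` during the remaining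
run. -/
theorem catchup_greedy_bounds (c t : ℕ) (hc : 2 ≤ c) (u : ℕ → ℕ)
    (hstep : ∀ s, t ≤ s → u (s + 1) ≤ u s + 1 - c) :
    ∀ t', t ≤ t' →
      (∃ k ≤ (u t' + c - 2) / (c - 1), u (t' + k) = 0) ∧
      (∀ p : ℕ → ℕ, (∀ s, t' ≤ s → p (s + 1) ≤ p s + 1) →
        ∀ k ≤ (u t' + c - 2) / (c - 1),
          p (t' + k) ≤ p t' + (u t' + c - 2) / (c - 1)) := by
  intro t' ht'
  have hdecr : ∀ s, t' ≤ s → u (s + 1) ≤ u s - (c - 1) := fun s hs => by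
    have := hstep s (ht'.trans hs)
    omega
  have hK : (u t' + c - 2) / (c - 1) = u t' ⌈/⌉ (c - 1) := by
    rw [Nat.ceilDiv_eq_add_pred_div]
    congr 1
    omega
  rw [hK]
  refine ⟨⟨_, le_rfl, Nat.apply_add_ceilDiv_eq_zero_of_forall_le_sub (by omega) hdecr⟩,
    fun p hp k hk => ?_⟩
  calc p (t' + k) ≤ p t' + k * 1 := Nat.le_add_mul_of_forall_le_add hp k
    _ ≤ p t' + u t' ⌈/⌉ (c - 1) := by omega
end
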